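/- Let B(t,x;{123,132}) = Σ_{n≥0} B_n(t;{123,132}) x^n be the formal power series in x, with coefficients in the polynomial ring ℤ[t], where B_n(t;{123,132}) = Σ_{π ∈ S_n({123,132})} t^{bdes(π)}. Then (1 − 2x + (1−t)x² + t(1−t)x³) · B(t,x;{123,132}) = 1 − x + (1−t)x² − (1−t)²x³ as an identity of formal power series in (ℤ[t])[[x]]. -/

import Mathlib

open scoped Classical

/-- A permutation `π` of `Fin n` contains the pattern `σ` (a permutation of `Fin m`)
if some subsequence of the one-line notation of `π` standardizes to `σ`. -/
def Contains {n m : ℕ} (π : Equiv.Perm (Fin n)) (σ : Equiv.Perm (Fin m)) : Prop :=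
  ∃ f : Fin m → Fin n, StrictMono f ∧ ∀ a b : Fin m, σ a < σ b ↔ π (f a) < π (f b)

/-- `π` avoids the pattern `σ`. -/
def Avoids {n m : ℕ} (π : Equiv.Perm (Fin n)) (σ : Equiv.Perm (Fin m)) : Prop :=
  ¬ Contains π σ

/-- The pattern 123 (identity, in 0-indexed one-line notation `[0,1,2]`). -/
def perm123 : Equiv.Perm (Fin 3) := 1

/-- The pattern 132 (0-indexed one-line notation `[0,2,1]`). -/
def perm132 : Equiv.Perm (Fin 3) := ⟨![0, 2, 1], ![0, 2, 1], by decide, by decide⟩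

/-- The pattern 213 (0-indexed one-line notation `[1,0,2]`). -/
def perm213 : Equiv.Perm (Fin 3) := ⟨![1, 0, 2], ![1, 0, 2], by decide, by decide⟩

/-- The pattern 231 (0-indexed one-line notation `[1,2,0]`). -/
def perm231 : Equiv.Perm (Fin 3) := ⟨![1, 2, 0], ![2, 0, 1], by decide, by decide⟩

/-- The pattern 312 (0-indexed one-line notation `[2,0,1]`). -/
def perm312 : Equiv.Perm (Fin 3) := ⟨![2, 0, 1], ![1, 2, 0], by decide, by decide⟩

/-- The pattern 321 (0-indexed one-line notation `[2,1,0]`). -/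
def perm321 : Equiv.Perm (Fin 3) := ⟨![2, 1, 0], ![2, 1, 0], by decide, by decide⟩

/-- The number of big descents of `π`: 0-indexed positions `k` with `π k > π (k+1) + 1`. -/
def bdes {n : ℕ} (π : Equiv.Perm (Fin n)) : ℕ :=
  ((Finset.range n).filter fun k =>
    ∃ hk : k + 1 < n, (π ⟨k + 1, hk⟩ : ℕ) + 1 < (π ⟨k, Nat.lt_of_succ_lt hk⟩ : ℕ)).card

/-- The generating function `B(t,x;{123,132}) = Σ_n Σ_{π ∈ S_n({123,132})} t^{bdes π} x^n`,
as a formal power series in `x` with coefficients in `ℤ[t]`. -/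
noncomputable def B123132 : PowerSeries (Polynomial ℤ) :=
  PowerSeries.mk fun n =>
    ∑ π ∈ Finset.univ.filter
      (fun π : Equiv.Perm (Fin n) => Avoids π perm123 ∧ Avoids π perm132),
      Polynomial.X ^ bdes π


/-!
A `{123, 132}`-avoider of length `m + 2` begins with `m + 1` or `m`, and deleting its first letter
leaves an arbitrary avoider of length `m + 1`. Prepending the maximum creates a new big descent
unless the old word began with its own maximum. Prepending the second largest value changes
nothing in front of a word beginning with its second largest value, and turns a word `M, π'`
beginning with its maximum `M` into `M, M + 1, π'`, with one big descent more than `π'`.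
For the generating functions `A`, `T`, `S` of all avoiders and of those beginning with the largest,
resp. second largest value, this gives `A = 1 + x + x²(T + S)`, `T = 1 + x(T + tS)` and
`S = 1 + xS + t(A - 1)`; eliminating `T` and `S` yields the identity.
-/

open Finset
open Equiv (Perm)

section PermCons

variable {m : ℕ}

/-- The permutation with one-line notation `c, c.succAbove (π 0), c.succAbove (π 1), …`:
`π` shifted past the new first letter `c`. -/
def permCons (c : Fin (m + 1)) (π : Perm (Fin m)) : Perm (Fin (m + 1)) :=
  c.cycleRange⁻¹ * Perm.decomposeFin.symm (0, π)

def permTail (ρ : Perm (Fin (m + 1))) : Perm (Fin m) :=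
  (Perm.decomposeFin ((ρ 0).cycleRange * ρ)).2

@[simp]
lemma permCons_apply_zero (c : Fin (m + 1)) (π : Perm (Fin m)) : permCons c π 0 = c := by
  simp [permCons, Perm.decomposeFin_symm_apply_zero]

@[simp]
lemma permCons_apply_succ (c : Fin (m + 1)) (π : Perm (Fin m)) (i : Fin m) :
    permCons c π i.succ = c.succAbove (π i) := by
  simp [permCons, Perm.decomposeFin_symm_apply_succ]

lemma permTail_permCons (c : Fin (m + 1)) (π : Perm (Fin m)) : permTail (permCons c π) = π := by
  have : c.cycleRange * permCons c π = Perm.decomposeFin.symm (0, π) := by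
    rw [permCons, mul_inv_cancel_left]
  simp [permTail, this]

lemma permCons_permTail (ρ : Perm (Fin (m + 1))) : permCons (ρ 0) (permTail ρ) = ρ := by
  set ρ' := (ρ 0).cycleRange * ρ
  have h0 : (Perm.decomposeFin ρ').1 = 0 := by
    have := Perm.decomposeFin_symm_apply_zero (Perm.decomposeFin ρ').1 (Perm.decomposeFin ρ').2
    rw [Prod.mk.eta, Equiv.symm_apply_apply] at this
    rw [← this]
    simp [ρ', Fin.cycleRange_self]
  have h : Perm.decomposeFin.symm (0, permTail ρ) = ρ' := by
    rw [← h0]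
    exact Perm.decomposeFin.symm_apply_apply ρ'
  rw [permCons, h, inv_mul_cancel_left]

lemma sum_filter_apply_zero_eq_sum_permCons {M : Type*} [AddCommMonoid M]
    (s : Finset (Perm (Fin (m + 1)))) (c : Fin (m + 1)) (f : Perm (Fin (m + 1)) → M) :
    ∑ ρ ∈ s.filter (· 0 = c), f ρ =
      ∑ π ∈ univ.filter (permCons c · ∈ s), f (permCons c π) := by
  refine sum_nbij' permTail (permCons c) ?_ ?_ ?_ ?_ ?_ <;>
    simp only [mem_filter, mem_univ, true_and]
  · rintro ρ ⟨hρ, rfl⟩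
    rwa [permCons_permTail]
  · intro π hπ
    exact ⟨hπ, permCons_apply_zero c π⟩
  · rintro ρ ⟨-, rfl⟩
    exact permCons_permTail ρ
  · intro π _
    exact permTail_permCons c π
  · rintro ρ ⟨-, rfl⟩
    rw [permCons_permTail]

def consMax (π : Perm (Fin m)) : Perm (Fin (m + 1)) := permCons (Fin.last m) π

def consSubmax (π : Perm (Fin (m + 1))) : Perm (Fin (m + 2)) := permCons (Fin.last m).castSucc π

@[simp]
lemma consMax_apply_zero (π : Perm (Fin m)) : consMax π 0 = Fin.last m :=
  permCons_apply_zero _ _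

@[simp]
lemma consSubmax_apply_zero (π : Perm (Fin (m + 1))) : consSubmax π 0 = (Fin.last m).castSucc :=
  permCons_apply_zero _ _

end PermCons

section Patterns

variable {m k : ℕ}

lemma contains_permCons_of_contains {π : Perm (Fin m)} {σ : Perm (Fin k)} (c : Fin (m + 1))
    (h : Contains π σ) : Contains (permCons c π) σ := by
  obtain ⟨f, hf, hσ⟩ := h
  refine ⟨Fin.succ ∘ f, Fin.strictMono_succ.comp hf, fun a b => ?_⟩
  simp [hσ, Fin.succAbove_lt_succAbove_iff]

/-- An occurrence of `σ` through the first letter `c` would need `k + 1` distinct values above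
`c`. -/
lemma contains_of_contains_permCons {π : Perm (Fin m)} {σ : Perm (Fin (k + 2))} {c : Fin (m + 1)}
    (hσ : σ 0 = 0) (hc : m ≤ c + k) (h : Contains (permCons c π) σ) : Contains π σ := by
  obtain ⟨f, hf, hfσ⟩ := h
  by_cases hf0 : f 0 = 0
  · exfalso
    have hgt : ∀ i : Fin (k + 1), c < permCons c π (f i.succ) := fun i => by
      have hσi : σ 0 < σ i.succ := by
        rw [hσ, Fin.pos_iff_ne_zero, ← hσ]
        exact σ.injective.ne (Fin.succ_ne_zero i)
      simpa [hf0] using (hfσ 0 i.succ).1 hσi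
    have hcard := card_le_card_of_injOn (s := univ) (t := Ioi c)
      (fun i : Fin (k + 1) => permCons c π (f i.succ)) (fun i _ => by simpa using hgt i)
      (fun i _ j _ hij => Fin.succ_injective _ (hf.injective ((permCons c π).injective hij)))
    simp only [card_univ, Fintype.card_fin, Fin.card_Ioi] at hcard
    omega
  · have hne : ∀ i, f i ≠ 0 := fun i hi => by
      have := hf.monotone (Fin.zero_le i)
      rw [hi, Fin.le_zero_iff] at this
      exact hf0 this
    refine ⟨fun i => (f i).pred (hne i), fun a b hab => Fin.pred_lt_pred_iff.2 (hf hab),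
      fun a b => ?_⟩
    rw [hfσ, ← Fin.succ_pred (f a) (hne a), ← Fin.succ_pred (f b) (hne b), permCons_apply_succ,
      permCons_apply_succ, Fin.succAbove_lt_succAbove_iff]

end Patterns

section Avoiders

noncomputable def avoiders (n : ℕ) : Finset (Perm (Fin n)) :=
  univ.filter fun π => Avoids π perm123 ∧ Avoids π perm132

lemma mem_avoiders {n : ℕ} {π : Perm (Fin n)} :
    π ∈ avoiders n ↔ Avoids π perm123 ∧ Avoids π perm132 := by
  simp [avoiders]

lemma avoiders_eq_univ {n : ℕ} (hn : n < 3) : avoiders n = univ := by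
  refine eq_univ_of_forall fun π => mem_avoiders.2 ⟨?_, ?_⟩ <;>
  · rintro ⟨f, hf, -⟩
    have := Fintype.card_le_of_injective f hf.injective
    simp only [Fintype.card_fin] at this
    omega

lemma contains_perm123_of_lt {n : ℕ} {π : Perm (Fin n)} {i j k : Fin n} (hij : i < j)
    (hjk : j < k) (h₁ : π i < π j) (h₂ : π j < π k) : Contains π perm123 := by
  refine ⟨![i, j, k], ?_, fun a b => ?_⟩
  · refine Fin.strictMono_iff_lt_succ.2 fun a => ?_
    fin_cases a <;> simpa
  · have h₃ := h₁.trans h₂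
    fin_cases a <;> fin_cases b <;> simp [perm123, h₁, h₂, h₃, h₁.le, h₂.le, h₃.le]

lemma contains_perm132_of_lt {n : ℕ} {π : Perm (Fin n)} {i j k : Fin n} (hij : i < j)
    (hjk : j < k) (h₁ : π i < π k) (h₂ : π k < π j) : Contains π perm132 := by
  refine ⟨![i, j, k], ?_, fun a b => ?_⟩
  · refine Fin.strictMono_iff_lt_succ.2 fun a => ?_
    fin_cases a <;> simpa
  · have h₃ := h₁.trans h₂
    fin_cases a <;> fin_cases b <;> simp [perm132, h₁, h₂, h₃, h₁.le, h₂.le, h₃.le]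

end Avoiders

section FirstLetter

variable {m : ℕ}

/-- If `ρ 0 < m`, the two largest values `m + 1` and `m` both follow `ρ 0`, in one order or the
other, giving a `132` or a `123`. -/
lemma le_apply_zero_of_mem_avoiders {ρ : Perm (Fin (m + 2))} (hρ : ρ ∈ avoiders (m + 2)) :
    m ≤ (ρ 0 : ℕ) := by
  obtain ⟨h123, h132⟩ := mem_avoiders.1 hρ
  by_contra! h0
  set i := ρ.symm (Fin.last (m + 1))
  set j := ρ.symm (Fin.last m).castSucc
  have hi : ρ i = Fin.last (m + 1) := ρ.apply_symm_apply _
  have hj : ρ j = (Fin.last m).castSucc := ρ.apply_symm_apply _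
  have hi0 : 0 < i := Fin.pos_iff_ne_zero.2 fun h => by
    rw [h, Fin.ext_iff] at hi
    simp at hi
    omega
  have hj0 : 0 < j := Fin.pos_iff_ne_zero.2 fun h => by
    rw [h, Fin.ext_iff] at hj
    simp at hj
    omega
  have hji : ρ j < ρ i := by
    rw [hi, hj]
    exact Fin.castSucc_lt_last _
  have h0j : ρ 0 < ρ j := by
    rw [hj, Fin.lt_def]
    simpa using h0
  rcases (ρ.symm.injective.ne (Fin.castSucc_lt_last _).ne' : i ≠ j).lt_or_gt with hij | hji'
  · exact h132 (contains_perm132_of_lt hi0 hij h0j hji)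
  · exact h123 (contains_perm123_of_lt hj0 hji' h0j hji)

lemma permCons_mem_avoiders_iff {c : Fin (m + 2)} {π : Perm (Fin (m + 1))} :
    permCons c π ∈ avoiders (m + 2) ↔ m ≤ (c : ℕ) ∧ π ∈ avoiders (m + 1) := by
  refine ⟨fun h => ⟨?_, ?_⟩, fun ⟨hc, hπ⟩ => ?_⟩
  · simpa using le_apply_zero_of_mem_avoiders h
  · obtain ⟨h123, h132⟩ := mem_avoiders.1 h
    exact mem_avoiders.2 ⟨fun h' => h123 (contains_permCons_of_contains c h'),
      fun h' => h132 (contains_permCons_of_contains c h')⟩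
  · obtain ⟨h123, h132⟩ := mem_avoiders.1 hπ
    exact mem_avoiders.2 ⟨fun h' => h123 (contains_of_contains_permCons rfl (by omega) h'),
      fun h' => h132 (contains_of_contains_permCons rfl (by omega) h')⟩

lemma sum_avoiders_succ_succ {M : Type*} [AddCommMonoid M] (f : Perm (Fin (m + 2)) → M) :
    ∑ ρ ∈ avoiders (m + 2), f ρ =
      ∑ π ∈ avoiders (m + 1), f (consMax π) +
        ∑ π ∈ avoiders (m + 1), f (consSubmax π) := by
  have hfilter : ∀ c : Fin (m + 2), m ≤ (c : ℕ) →
      univ.filter (permCons c · ∈ avoiders (m + 2)) = avoiders (m + 1) := fun c hc => by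
    ext π
    simp [permCons_mem_avoiders_iff, hc]
  have hsecond : (avoiders (m + 2)).filter (¬ · 0 = Fin.last (m + 1)) =
      (avoiders (m + 2)).filter (· 0 = (Fin.last m).castSucc) := by
    refine filter_congr fun ρ hρ => ?_
    have := le_apply_zero_of_mem_avoiders hρ
    have := (ρ 0).isLt
    simp only [Fin.ext_iff, Fin.val_last, Fin.val_castSucc]
    omega
  rw [← sum_filter_add_sum_filter_not _ (· 0 = Fin.last (m + 1)), hsecond,
    sum_filter_apply_zero_eq_sum_permCons, sum_filter_apply_zero_eq_sum_permCons,
    hfilter _ (by simp), hfilter _ (by simp)]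
  rfl

end FirstLetter

section BigDescents

variable {n : ℕ}

def bdesWord (w : Fin n → ℕ) : ℕ :=
  ((range n).filter fun k => ∃ hk : k + 1 < n, w ⟨k + 1, hk⟩ + 1 < w ⟨k, by omega⟩).card

lemma bdes_eq_bdesWord (π : Perm (Fin n)) : bdes π = bdesWord fun i => (π i : ℕ) := rfl

lemma bdesWord_cons (a : ℕ) (w : Fin (n + 1) → ℕ) :
    bdesWord (Fin.cons a w : Fin (n + 2) → ℕ) = bdesWord w + if w 0 + 1 < a then 1 else 0 := by
  rw [bdesWord, bdesWord, card_filter, card_filter, sum_range_succ']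
  congr 1
  · refine sum_congr rfl fun k _ => if_congr ?_ rfl rfl
    exact ⟨fun ⟨hk, h⟩ => ⟨by omega, h⟩, fun ⟨hk, h⟩ => ⟨by omega, h⟩⟩
  · exact if_congr ⟨fun ⟨_, h⟩ => h, fun h => ⟨Nat.succ_lt_succ n.succ_pos, h⟩⟩ rfl rfl

lemma bdesWord_congr {w w' : Fin n → ℕ} (h : ∀ i j, w' j + 1 < w' i ↔ w j + 1 < w i) :
    bdesWord w' = bdesWord w := by
  simp only [bdesWord, h]

lemma val_succAbove_eq_ite (c : Fin (n + 1)) (x : Fin n) :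
    (c.succAbove x : ℕ) = if (x : ℕ) < c then (x : ℕ) else (x : ℕ) + 1 := by
  rcases lt_or_ge (x : ℕ) c with h | h
  · rw [Fin.succAbove_of_castSucc_lt _ _ (by simpa [Fin.lt_def] using h), if_pos h,
      Fin.val_castSucc]
  · rw [Fin.succAbove_of_le_castSucc _ _ (by simpa [Fin.le_def] using h), if_neg (by omega),
      Fin.val_succ]

lemma bdes_permCons (c : Fin (n + 2)) (π : Perm (Fin (n + 1))) :
    bdes (permCons c π) =
      (bdesWord fun i => (c.succAbove (π i) : ℕ)) +
        if (c.succAbove (π 0) : ℕ) + 1 < c then 1 else 0 := by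
  rw [bdes_eq_bdesWord, ← bdesWord_cons]
  congr 1
  funext i
  cases i using Fin.cases <;> simp

end BigDescents

section ConsMaxBigDescents

variable {m : ℕ}

lemma bdes_consMax (π : Perm (Fin (m + 1))) :
    bdes (consMax π) = bdes π + if π 0 = Fin.last m then 0 else 1 := by
  rw [consMax, bdes_permCons, bdes_eq_bdesWord]
  simp only [Fin.succAbove_last, Fin.val_castSucc, Fin.val_last, Fin.ext_iff]
  have := (π 0).isLt
  congr 1
  split_ifs <;> omega

lemma bdes_consSubmax_consMax (π : Perm (Fin (m + 1))) :
    bdes (consSubmax (consMax π)) = bdes π + 1 := by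
  have hw : (fun i => ((Fin.last (m + 1)).castSucc.succAbove (consMax π i) : ℕ)) =
      Fin.cons (m + 2) fun i => (π i : ℕ) := by
    funext i
    cases i using Fin.cases <;> simp [consMax]
  rw [consSubmax, bdes_permCons, hw, bdesWord_cons, ← bdes_eq_bdesWord]
  have := (π 0).isLt
  simp only [consMax, permCons_apply_zero, Fin.succAbove_castSucc_self, Fin.val_succ,
    Fin.val_last, Fin.val_castSucc]
  split_ifs <;> omega

lemma bdes_consSubmax_consSubmax (π : Perm (Fin (m + 1))) :
    bdes (consSubmax (consSubmax π)) = bdes (consSubmax π) := by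
  have hw : (fun i => ((Fin.last (m + 1)).castSucc.succAbove (consSubmax π i) : ℕ)) =
      Fin.cons m fun i => ((Fin.last (m + 1)).castSucc.succAbove
        ((Fin.last m).castSucc.succAbove (π i)) : ℕ) := by
    funext i
    cases i using Fin.cases <;> simp [consSubmax]
  rw [consSubmax, bdes_permCons, hw, bdesWord_cons, consSubmax, bdes_permCons, add_assoc]
  have hπ : ∀ i, (π i : ℕ) < m + 1 := fun i => (π i).isLt
  congr 1
  · refine bdesWord_congr fun i j => ?_
    simp only [val_succAbove_eq_ite, Fin.val_castSucc, Fin.val_last]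
    have := hπ i
    have := hπ j
    split_ifs <;> omega
  · simp only [permCons_apply_zero, val_succAbove_eq_ite, Fin.val_castSucc, Fin.val_last]
    have := hπ 0
    split_ifs <;> omega

end ConsMaxBigDescents

section Recurrences

open Polynomial

noncomputable def bdesPoly (n : ℕ) : ℤ[X] := ∑ π ∈ avoiders n, X ^ bdes π

noncomputable def bdesPolyConsMax (n : ℕ) : ℤ[X] :=
  ∑ π ∈ avoiders (n + 1), X ^ bdes (consMax π)

noncomputable def bdesPolyConsSubmax (n : ℕ) : ℤ[X] :=
  ∑ π ∈ avoiders (n + 1), X ^ bdes (consSubmax π)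

lemma bdesPoly_zero : bdesPoly 0 = 1 := by
  simp [bdesPoly, avoiders_eq_univ, bdes]

lemma bdesPoly_one : bdesPoly 1 = 1 := by
  simp [bdesPoly, avoiders_eq_univ, bdes]

lemma bdesPolyConsMax_zero : bdesPolyConsMax 0 = 1 := by
  simp only [bdesPolyConsMax, bdes_consMax]
  simp [avoiders_eq_univ, bdes]

lemma bdesPolyConsSubmax_zero : bdesPolyConsSubmax 0 = 1 := by
  simp [bdesPolyConsSubmax, avoiders_eq_univ, consSubmax, bdes_permCons, bdesWord]

lemma bdesPoly_add_two (n : ℕ) : bdesPoly (n + 2) = bdesPolyConsMax n + bdesPolyConsSubmax n :=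
  sum_avoiders_succ_succ _

lemma bdesPolyConsMax_succ (n : ℕ) :
    bdesPolyConsMax (n + 1) = bdesPolyConsMax n + X * bdesPolyConsSubmax n := by
  rw [bdesPolyConsMax, sum_avoiders_succ_succ, bdesPolyConsMax, bdesPolyConsSubmax, mul_sum]
  congr 1 <;> refine sum_congr rfl fun π _ => ?_
  · rw [bdes_consMax (consMax π), consMax_apply_zero, if_pos rfl, add_zero]
  · rw [bdes_consMax (consSubmax π), consSubmax_apply_zero, if_neg (Fin.castSucc_lt_last _).ne,
      pow_succ']

lemma bdesPolyConsSubmax_succ (n : ℕ) :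
    bdesPolyConsSubmax (n + 1) = bdesPolyConsSubmax n + X * bdesPoly (n + 1) := by
  rw [add_comm (bdesPolyConsSubmax n), bdesPolyConsSubmax, sum_avoiders_succ_succ,
    bdesPolyConsSubmax, bdesPoly, mul_sum]
  congr 1 <;> refine sum_congr rfl fun π _ => ?_
  · rw [bdes_consSubmax_consMax, pow_succ']
  · rw [bdes_consSubmax_consSubmax]

end Recurrences

section GeneratingFunction

open PowerSeries

lemma mk_bdesPoly :
    PowerSeries.mk bdesPoly =
      1 + X + X ^ 2 * (PowerSeries.mk bdesPolyConsMax + PowerSeries.mk bdesPolyConsSubmax) := by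
  refine PowerSeries.ext fun n => ?_
  rcases n with _ | _ | n <;>
    simp [coeff_X_pow_mul', coeff_X, bdesPoly_zero, bdesPoly_one, bdesPoly_add_two]

lemma mk_bdesPolyConsMax :
    PowerSeries.mk bdesPolyConsMax =
      1 + X * (PowerSeries.mk bdesPolyConsMax +
        C Polynomial.X * PowerSeries.mk bdesPolyConsSubmax) := by
  refine PowerSeries.ext fun n => ?_
  rcases n with _ | n <;> simp [coeff_succ_X_mul, bdesPolyConsMax_zero, bdesPolyConsMax_succ]

lemma mk_bdesPolyConsSubmax :
    PowerSeries.mk bdesPolyConsSubmax =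
      1 + X * PowerSeries.mk bdesPolyConsSubmax +
        C Polynomial.X * (PowerSeries.mk bdesPoly - 1) := by
  refine PowerSeries.ext fun n => ?_
  rcases n with _ | n <;>
    simp [coeff_succ_X_mul, bdesPolyConsSubmax_zero, bdesPolyConsSubmax_succ, bdesPoly_zero]

end GeneratingFunction

/-- `(1 − 2x + (1−t)x² + t(1−t)x³) · B(t,x;{123,132}) = 1 − x + (1−t)x² − (1−t)²x³`. -/
theorem genfun_avoids123_132 :
    letI X : PowerSeries (Polynomial ℤ) := PowerSeries.X
    letI T : PowerSeries (Polynomial ℤ) := PowerSeries.C (R := Polynomial ℤ) Polynomial.X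
    (1 - 2 * X + (1 - T) * X ^ 2 + T * (1 - T) * X ^ 3) * B123132 =
      1 - X + (1 - T) * X ^ 2 - (1 - T) ^ 2 * X ^ 3 := by
  have hB : B123132 = PowerSeries.mk bdesPoly := rfl
  rw [hB]
  open PowerSeries in
  linear_combination (1 - X) ^ 2 * mk_bdesPoly + X ^ 2 * (1 - X) * mk_bdesPolyConsMax +
    X ^ 2 * (1 - X + C Polynomial.X * X) * mk_bdesPolyConsSubmax
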